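/- (Complementary slackness for the SOCP primal–dual pair.) Let w ∈ ℝ^W, let (x, y, z_s, z_q) be FP'(w)-feasible, and let (μ_f, μ_y, λ_s, λ_q) be dual feasible with 1ᵀz_s + 1ᵀz_q = D_w(μ, λ) (equal objective values). Then: ⟨1 − λ_s, z_s⟩ = 0, ⟨1 − λ_q, z_q⟩ = 0, ⟨λ_s, A_s x + γ_s − z_s⟩ = 0, and for every j ∈ {1,…,N}: λ_{q,j} · (‖y_j‖₂ − ⟨c_q^j, x⟩ − γ_q^j − z_{q,j}) = 0 and ⟨μ_y^j, y_j⟩ + λ_{q,j}‖y_j‖₂ = 0. -/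

import Mathlib

open Matrix

/-- Euclidean norm on `Fin k → ℝ`. -/
noncomputable def euclNorm {k : ℕ} (y : Fin k → ℝ) : ℝ := Real.sqrt (∑ i, (y i) ^ 2)

/-- Euclidean inner product on `Fin k → ℝ`. -/
def dotp {k : ℕ} (a b : Fin k → ℝ) : ℝ := ∑ i, a i * b i

/-- The constant data of the SOCP `FP'(w)` (and of its dual `DP'(w)`). -/
structure SOCPData (n m s N W : ℕ) where
  Af : Matrix (Fin m) (Fin n) ℝ
  Bf : Matrix (Fin m) (Fin W) ℝ
  As : Matrix (Fin s) (Fin n) ℝ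
  gf : Fin m → ℝ
  gs : Fin s → ℝ
  Ay : Fin N → Matrix (Fin 3) (Fin n) ℝ
  bY : Fin N → Fin 3 → ℝ
  cq : Fin N → Fin n → ℝ
  gq : Fin N → ℝ

/-- Feasibility of `(x, y, z_s, z_q)` for the SOCP `FP'(w)`. -/
def FPfeas {n m s N W : ℕ} (d : SOCPData n m s N W) (w : Fin W → ℝ) (x : Fin n → ℝ)
    (y : Fin N → Fin 3 → ℝ) (zs : Fin s → ℝ) (zq : Fin N → ℝ) : Prop :=
  (∀ i, 0 ≤ zs i) ∧ (∀ j, 0 ≤ zq j) ∧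
  d.Af.mulVec x + d.Bf.mulVec w + d.gf = 0 ∧
  (∀ i, d.As.mulVec x i + d.gs i ≤ zs i) ∧
  (∀ j, y j = (d.Ay j).mulVec x + d.bY j) ∧
  (∀ j, euclNorm (y j) ≤ dotp (d.cq j) x + d.gq j + zq j)

/-- Dual feasibility of `(μ_f, μ_y, λ_s, λ_q)` for `DP'(w)`. -/
def DualFeas {n m s N W : ℕ} (d : SOCPData n m s N W) (muf : Fin m → ℝ)
    (muy : Fin N → Fin 3 → ℝ) (ls : Fin s → ℝ) (lq : Fin N → ℝ) : Prop :=
  (∀ i, 0 ≤ ls i ∧ ls i ≤ 1) ∧ (∀ j, 0 ≤ lq j ∧ lq j ≤ 1) ∧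
  (d.Af.transpose.mulVec muf + d.As.transpose.mulVec ls
    = (∑ j, (d.Ay j).transpose.mulVec (muy j)) + ∑ j, lq j • d.cq j) ∧
  (∀ j, euclNorm (muy j) ≤ lq j)

/-- The dual objective `D_w(μ, λ)`. -/
def Dobj {n m s N W : ℕ} (d : SOCPData n m s N W) (w : Fin W → ℝ) (muf : Fin m → ℝ)
    (muy : Fin N → Fin 3 → ℝ) (ls : Fin s → ℝ) (lq : Fin N → ℝ) : ℝ :=
  dotp muf (d.Bf.mulVec w + d.gf) + dotp ls d.gs
    - (∑ j, dotp (muy j) (d.bY j)) - ∑ j, lq j * d.gq j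

/-- `fp'(w)`: the optimal (infimum) value of the primal SOCP `FP'(w)`, in `EReal`. -/
noncomputable def fpVal {n m s N W : ℕ} (d : SOCPData n m s N W) (w : Fin W → ℝ) : EReal :=
  sInf {v : EReal | ∃ x y zs zq, FPfeas d w x y zs zq ∧
    v = (((∑ i, zs i) + ∑ j, zq j : ℝ) : EReal)}

/-- `dp'(w)`: the optimal (supremum) value of the dual SOCP `DP'(w)`, in `EReal`. -/
noncomputable def dpVal {n m s N W : ℕ} (d : SOCPData n m s N W) (w : Fin W → ℝ) : EReal :=
  sSup {v : EReal | ∃ muf muy ls lq, DualFeas d muf muy ls lq ∧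
    v = ((Dobj d w muf muy ls lq : ℝ) : EReal)}

/-!
The duality gap `(1ᵀz_s + 1ᵀz_q) - D_w(μ, λ)` of a primal–dual feasible pair splits, using only
the linear constraints, into five sums whose terms are nonnegative: by the bounds on `z` and `λ`,
by the primal inequalities, and, for `⟨μ_y^j, y_j⟩ + λ_{q,j}‖y_j‖`, by Cauchy–Schwarz together
with `‖μ_y^j‖ ≤ λ_{q,j}`. A zero gap therefore forces every term to vanish.
-/

lemma dotp_eq_dotProduct {k : ℕ} (a b : Fin k → ℝ) : dotp a b = a ⬝ᵥ b := rfl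

lemma euclNorm_nonneg {k : ℕ} (v : Fin k → ℝ) : 0 ≤ euclNorm v := Real.sqrt_nonneg _

lemma neg_euclNorm_mul_le_dotp {k : ℕ} (a b : Fin k → ℝ) :
    -(euclNorm a * euclNorm b) ≤ dotp a b := by
  have h := Real.sum_mul_le_sqrt_mul_sqrt Finset.univ (fun i => -a i) b
  simp only [neg_sq, neg_mul, Finset.sum_neg_distrib] at h
  simp only [euclNorm, dotp]
  linarith

lemma dotp_add_mul_euclNorm_nonneg {k : ℕ} {u : Fin k → ℝ} {t : ℝ} (hu : euclNorm u ≤ t)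
    (v : Fin k → ℝ) : 0 ≤ dotp u v + t * euclNorm v := by
  have := mul_le_mul_of_nonneg_right hu (euclNorm_nonneg v)
  linarith [neg_euclNorm_mul_le_dotp u v]

namespace SOCPData

variable {n m s N W : ℕ} (d : SOCPData n m s N W) {w : Fin W → ℝ} {x : Fin n → ℝ}
  {y : Fin N → Fin 3 → ℝ} {muf : Fin m → ℝ} {muy : Fin N → Fin 3 → ℝ} {ls : Fin s → ℝ}
  {lq : Fin N → ℝ}

lemma Dobj_eq_of_primal_eq (hAf : d.Af *ᵥ x + d.Bf *ᵥ w + d.gf = 0)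
    (hy : ∀ j, y j = d.Ay j *ᵥ x + d.bY j)
    (hdual : d.Afᵀ *ᵥ muf + d.Asᵀ *ᵥ ls = (∑ j, (d.Ay j)ᵀ *ᵥ muy j) + ∑ j, lq j • d.cq j) :
    Dobj d w muf muy ls lq = dotp ls (d.As *ᵥ x + d.gs)
      - ∑ j, (dotp (muy j) (y j) + lq j * (dotp (d.cq j) x + d.gq j)) := by
  have hBf : d.Bf *ᵥ w + d.gf = -(d.Af *ᵥ x) :=
    eq_neg_of_add_eq_zero_right (by rw [← add_assoc, hAf])
  -- pair the dual equality constraint with `x`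
  have hpair := congrArg (· ⬝ᵥ x) hdual
  simp only [mulVec_transpose, add_dotProduct, sum_dotProduct, smul_dotProduct,
    ← dotProduct_mulVec, smul_eq_mul] at hpair
  simp only [Dobj, dotp_eq_dotProduct, hBf, hy, dotProduct_add, dotProduct_neg, mul_add,
    Finset.sum_add_distrib] at hpair ⊢
  linarith

lemma primal_sub_Dobj_eq {zs : Fin s → ℝ} {zq : Fin N → ℝ}
    (hAf : d.Af *ᵥ x + d.Bf *ᵥ w + d.gf = 0) (hy : ∀ j, y j = d.Ay j *ᵥ x + d.bY j)
    (hdual : d.Afᵀ *ᵥ muf + d.Asᵀ *ᵥ ls = (∑ j, (d.Ay j)ᵀ *ᵥ muy j) + ∑ j, lq j • d.cq j) :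
    (∑ i, zs i) + (∑ j, zq j) - Dobj d w muf muy ls lq
      = (∑ i, (1 - ls i) * zs i) + (∑ i, ls i * (zs i - ((d.As *ᵥ x) i + d.gs i)))
        + (∑ j, (1 - lq j) * zq j)
        + (∑ j, lq j * (dotp (d.cq j) x + d.gq j + zq j - euclNorm (y j)))
        + ∑ j, (dotp (muy j) (y j) + lq j * euclNorm (y j)) := by
  rw [d.Dobj_eq_of_primal_eq hAf hy hdual]
  simp only [dotp, Pi.add_apply, mul_add, mul_sub, sub_mul, one_mul, Finset.sum_add_distrib,
    Finset.sum_sub_distrib]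
  ring

end SOCPData

theorem stmt_13_general {n m s N W : ℕ} (d : SOCPData n m s N W) (w : Fin W → ℝ)
    (x : Fin n → ℝ) (y : Fin N → Fin 3 → ℝ) (zs : Fin s → ℝ) (zq : Fin N → ℝ)
    (hP : FPfeas d w x y zs zq)
    (muf : Fin m → ℝ) (muy : Fin N → Fin 3 → ℝ) (ls : Fin s → ℝ) (lq : Fin N → ℝ)
    (hD : DualFeas d muf muy ls lq)
    (heq : (∑ i, zs i) + ∑ j, zq j = Dobj d w muf muy ls lq) :
    (∑ i, (1 - ls i) * zs i) = 0 ∧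
    (∑ j, (1 - lq j) * zq j) = 0 ∧
    (∑ i, ls i * (d.As.mulVec x i + d.gs i - zs i)) = 0 ∧
    (∀ j, lq j * (euclNorm (y j) - dotp (d.cq j) x - d.gq j - zq j) = 0) ∧
    (∀ j, dotp (muy j) (y j) + lq j * euclNorm (y j) = 0) := by
  obtain ⟨hzs, hzq, hAf, hAs, hy, hcone⟩ := hP
  obtain ⟨hls, hlq, hdual, hmu⟩ := hD
  have hgap := d.primal_sub_Dobj_eq (zs := zs) (zq := zq) hAf hy hdual
  have gap_zs i : 0 ≤ (1 - ls i) * zs i := mul_nonneg (by linarith [hls i]) (hzs i)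
  have gap_As i : 0 ≤ ls i * (zs i - ((d.As *ᵥ x) i + d.gs i)) :=
    mul_nonneg (hls i).1 (by linarith [hAs i])
  have gap_zq j : 0 ≤ (1 - lq j) * zq j := mul_nonneg (by linarith [hlq j]) (hzq j)
  have gap_cone j : 0 ≤ lq j * (dotp (d.cq j) x + d.gq j + zq j - euclNorm (y j)) :=
    mul_nonneg (hlq j).1 (by linarith [hcone j])
  have gap_muy j : 0 ≤ dotp (muy j) (y j) + lq j * euclNorm (y j) :=
    dotp_add_mul_euclNorm_nonneg (hmu j) (y j)
  have sum_zs := Finset.sum_nonneg fun i (_ : i ∈ Finset.univ) => gap_zs i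
  have sum_As := Finset.sum_nonneg fun i (_ : i ∈ Finset.univ) => gap_As i
  have sum_zq := Finset.sum_nonneg fun j (_ : j ∈ Finset.univ) => gap_zq j
  have sum_cone := Finset.sum_nonneg fun j (_ : j ∈ Finset.univ) => gap_cone j
  have sum_muy := Finset.sum_nonneg fun j (_ : j ∈ Finset.univ) => gap_muy j
  have zero_As := (Finset.sum_eq_zero_iff_of_nonneg fun i _ => gap_As i).1 (by linarith)
  have zero_cone := (Finset.sum_eq_zero_iff_of_nonneg fun j _ => gap_cone j).1 (by linarith)
  have zero_muy := (Finset.sum_eq_zero_iff_of_nonneg fun j _ => gap_muy j).1 (by linarith)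
  refine ⟨by linarith, by linarith, ?_, fun j => ?_, fun j => zero_muy j (Finset.mem_univ j)⟩
  · exact Finset.sum_eq_zero fun i hi => by linear_combination -zero_As i hi
  · linear_combination -zero_cone j (Finset.mem_univ j)

/-- Complementary slackness for the SOCP primal–dual pair: if a primal feasible
point and a dual feasible point have equal objective values, then all the
complementarity relations hold. -/
theorem stmt_13 {n m s N W : ℕ} (hn : 0 < n) (hm : 0 < m) (hs : 0 < s) (hN : 0 < N)
    (hW : 0 < W) (d : SOCPData n m s N W) (w : Fin W → ℝ)
    (x : Fin n → ℝ) (y : Fin N → Fin 3 → ℝ) (zs : Fin s → ℝ) (zq : Fin N → ℝ)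
    (hP : FPfeas d w x y zs zq)
    (muf : Fin m → ℝ) (muy : Fin N → Fin 3 → ℝ) (ls : Fin s → ℝ) (lq : Fin N → ℝ)
    (hD : DualFeas d muf muy ls lq)
    (heq : (∑ i, zs i) + ∑ j, zq j = Dobj d w muf muy ls lq) :
    (∑ i, (1 - ls i) * zs i) = 0 ∧
    (∑ j, (1 - lq j) * zq j) = 0 ∧
    (∑ i, ls i * (d.As.mulVec x i + d.gs i - zs i)) = 0 ∧
    (∀ j, lq j * (euclNorm (y j) - dotp (d.cq j) x - d.gq j - zq j) = 0) ∧
    (∀ j, dotp (muy j) (y j) + lq j * euclNorm (y j) = 0) :=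
  stmt_13_general d w x y zs zq hP muf muy ls lq hD heq
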